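/- The polynomial P₁(z) = 5z − 1 has exactly one root in (0,1); for d = 7 (m = 1), a formal power series solution u(y) = c + c₁(y−1) + ... of the Yang–Mills ODE at y = 1 with c ∈ (0,1) requires either c ∈ {0, 1} or 5c² = 1. -/

import Mathlib

/-!
Writing `u = c + c₁ t + c₂ t² + ⋯`, the coefficients of `t⁰` and `t¹` in the ODE give, for every `d`,
`(d - 5) c₁ + (d - 2) c (1 - c²) = 0` and `(2d - 14) c₂ + ((d - 9) + (d - 2)(1 - 3c²)) c₁ = 0`.
At `d = 7` the coefficient of `c₂` vanishes (resonance), so the second relation becomes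
`(3 - 15 c²) c₁ = 0`. Either `5c² = 1`, or `c₁ = 0` and then `c (1 - c²) = 0`, which is
impossible for `c ∈ (0, 1)`.
-/

open PowerSeries

/-- The formal self-similar Yang–Mills ODE at `y = 1`: the unknown `u` is a formal power
series in `t = y - 1`, so `y` corresponds to the series `1 + X`. -/
def FormalYMSolution (d : ℝ) (u : PowerSeries ℝ) : Prop :=
  (1 + X) ^ 2 * (1 - (1 + X) ^ 2) * (PowerSeries.derivative ℝ (PowerSeries.derivative ℝ u))
    + (C (d - 3) * (1 + X) - C (2 : ℝ) * (1 + X) ^ 3) * PowerSeries.derivative ℝ u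
    + C (d - 2) * u * (1 - u ^ 2) = 0

@[simp]
theorem PowerSeries.constantCoeff_derivative {R : Type*} [CommSemiring R] (f : R⟦X⟧) :
    constantCoeff (derivative R f) = coeff 1 f := by
  simpa using constantCoeff_iterate_derivative f 1

namespace FormalYMSolution

variable {d : ℝ} {u : PowerSeries ℝ}

theorem coeff_zero_eq (h : FormalYMSolution d u) :
    (d - 5) * coeff 1 u + (d - 2) * (coeff 0 u * (1 - coeff 0 u ^ 2)) = 0 := by
  have h0 := congrArg constantCoeff h
  simp only [map_add, map_mul, map_sub, map_pow, map_one, constantCoeff_X, constantCoeff_C,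
    constantCoeff_derivative, map_zero] at h0
  simp only [coeff_zero_eq_constantCoeff_apply]
  linear_combination h0

theorem coeff_one_eq (h : FormalYMSolution d u) :
    (2 * d - 14) * coeff 2 u
      + ((d - 9) + (d - 2) * (1 - 3 * coeff 0 u ^ 2)) * coeff 1 u = 0 := by
  have h1 := congrArg (coeff 1) h
  simp only [pow_succ, pow_zero, one_mul, map_sub, map_add, coeff_one_mul, coeff_one,
    one_ne_zero, ↓reduceIte, coeff_one_X, zero_add, constantCoeff_one, constantCoeff_X,
    add_zero, mul_one, map_mul, sub_self, mul_zero, zero_sub, neg_add_rev,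
    constantCoeff_derivative, coeff_derivative, Nat.reduceAdd, Nat.cast_one, Nat.cast_ofNat,
    coeff_succ_C, constantCoeff_C, coeff_C_mul, zero_mul, map_zero] at h1
  simp only [coeff_zero_eq_constantCoeff_apply]
  linear_combination h1

end FormalYMSolution

theorem stmt9 :
    (∃! z : ℝ, z ∈ Set.Ioo (0 : ℝ) 1 ∧ 5 * z - 1 = 0) ∧
    (∀ u : PowerSeries ℝ, FormalYMSolution 7 u →
      coeff 0 u ∈ Set.Ioo (0 : ℝ) 1 →
      coeff 0 u = 0 ∨ coeff 0 u = 1 ∨ 5 * (coeff 0 u) ^ 2 = 1) := by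
  refine ⟨⟨1 / 5, ⟨by norm_num, by norm_num⟩, fun z ⟨_, hz⟩ => by linarith⟩, ?_⟩
  rintro u h ⟨hc_pos, hc_lt_one⟩
  have resonance : (3 - 15 * coeff 0 u ^ 2) * coeff 1 u = 0 := by
    linear_combination h.coeff_one_eq
  rcases mul_eq_zero.mp resonance with hc | hc₁
  · exact Or.inr (Or.inr (by linarith))
  · have hc : coeff 0 u * (1 - coeff 0 u ^ 2) = 0 := by
      linear_combination (h.coeff_zero_eq - 2 * hc₁) / 5
    exact absurd hc (mul_pos hc_pos (by nlinarith)).ne'
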